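/- arXiv:1803.06737 — 5 statements merged into one kernel-verified Lean document; each statement's English description precedes it below -/
import Mathlib

section
/- Let θ > 0 and let g : ℝ × ℝ → ℝ be given by g(x,n) = n·((R₁ - T₁)·x + (S₁ - P₁)·(1-x)) + (1-n)·((R₀ - T₀)·x + (S₀ - P₀)·(1-x)) for real parameters R₀,S₀,T₀,P₀,R₁,S₁,T₁,P₁. Define the smooth vector fields F(x,n) = (x(1-x)·g(x,n), n(1-n)·(-1+(1+θ)x)) and G(x,n) = (x²(1-x)(1-n), 0) on ℝ². Then the Lie bracket [F,G] = (DG)F − (DF)G has second component equal to −n(1-n)(1+θ)·x²(1-x)(1-n) at every point (x,n); in particular, the second component of [F,G](x,n) is nonzero for every (x,n) ∈ (0,1)². -/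
/-! Since the second component of `G` vanishes identically, so does that of `(DG)F`, and the
second component of `(DF)G` is `∂ₓF₂ · G₁ = n(1-n)(1+θ) · G₁`; the payoff function `g` only
enters through the differentiability of `F`. -/

open ContinuousLinearMap

section LieBracket

variable {𝕜 E F₁ F₂ : Type*} [NontriviallyNormedField 𝕜]
  [NormedAddCommGroup E] [NormedSpace 𝕜 E] [NormedAddCommGroup F₁] [NormedSpace 𝕜 F₁]
  [NormedAddCommGroup F₂] [NormedSpace 𝕜 F₂]

/-- Holds also where `G` is not differentiable, since then `fderiv` is `0`. -/
theorem snd_fderiv_apply_eq_zero_of_snd_eq_zero {G : E → F₁ × F₂} (hG : ∀ q, (G q).2 = 0)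
    (p v : E) : (fderiv 𝕜 G p v).2 = 0 := by
  by_cases hdiff : DifferentiableAt 𝕜 G p
  · have hsnd : (fun q => (G q).2) = fun _ => 0 := funext hG
    calc (fderiv 𝕜 G p v).2 = fderiv 𝕜 (fun q => (G q).2) p v := by rw [fderiv.snd hdiff]; rfl
      _ = 0 := by rw [hsnd, fderiv_fun_const]; rfl
  · simp [fderiv_zero_of_not_differentiableAt hdiff]

theorem snd_lieBracket_of_snd_eq_zero {F G : F₁ × F₂ → F₁ × F₂} {p : F₁ × F₂}
    (hF : DifferentiableAt 𝕜 F p) (hG : ∀ q, (G q).2 = 0) :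
    (fderiv 𝕜 G p (F p) - fderiv 𝕜 F p (G p)).2 = -fderiv 𝕜 (fun q => (F q).2) p (G p) := by
  rw [Prod.snd_sub, snd_fderiv_apply_eq_zero_of_snd_eq_zero hG, fderiv.snd hF, zero_sub,
    comp_apply, coe_snd']

end LieBracket

theorem hasFDerivAt_environmentFeedback (θ x n : ℝ) :
    HasFDerivAt (fun p : ℝ × ℝ => p.2 * (1 - p.2) * (-1 + (1 + θ) * p.1))
      ((n * (1 - n) * (1 + θ)) • fst ℝ ℝ ℝ + ((1 - 2 * n) * (-1 + (1 + θ) * x)) • snd ℝ ℝ ℝ)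
      (x, n) := by
  refine ((hasFDerivAt_snd.mul ((hasFDerivAt_const (1 : ℝ) ((x, n) : ℝ × ℝ)).sub
    hasFDerivAt_snd)).mul ((hasFDerivAt_const (-1 : ℝ) ((x, n) : ℝ × ℝ)).add
    ((hasFDerivAt_fst (𝕜 := ℝ) (E := ℝ) (F := ℝ)).const_mul (1 + θ)))).congr_fderiv ?_
  ext
  · simp
  · simp
    ring

/-- The second component of the Lie bracket [F,G] = (DG)F − (DF)G of the
feedback-evolving game vector field F and the control vector field G equals
−n(1−n)(1+θ)·x²(1−x)(1−n) everywhere, and in particular is nonzero on (0,1)². -/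
theorem lie_bracket_second_component
    (θ R₀ S₀ T₀ P₀ R₁ S₁ T₁ P₁ : ℝ) (hθ : 0 < θ)
    (g : ℝ × ℝ → ℝ)
    (hg : ∀ x n : ℝ, g (x, n)
      = n * ((R₁ - T₁) * x + (S₁ - P₁) * (1 - x))
        + (1 - n) * ((R₀ - T₀) * x + (S₀ - P₀) * (1 - x)))
    (F G : ℝ × ℝ → ℝ × ℝ)
    (hF : ∀ x n : ℝ, F (x, n)
      = (x * (1 - x) * g (x, n), n * (1 - n) * (-1 + (1 + θ) * x)))
    (hG : ∀ x n : ℝ, G (x, n) = (x ^ 2 * (1 - x) * (1 - n), 0))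
    (bracket : ℝ × ℝ → ℝ × ℝ)
    (hbracket : ∀ p : ℝ × ℝ, bracket p = fderiv ℝ G p (F p) - fderiv ℝ F p (G p)) :
    (∀ x n : ℝ,
      (bracket (x, n)).2 = -(n * (1 - n) * (1 + θ)) * (x ^ 2 * (1 - x) * (1 - n))) ∧
    (∀ x n : ℝ, x ∈ Set.Ioo (0 : ℝ) 1 → n ∈ Set.Ioo (0 : ℝ) 1 →
      (bracket (x, n)).2 ≠ 0) := by
  have hg_diff : Differentiable ℝ g := by
    rw [show g = fun p => p.2 * ((R₁ - T₁) * p.1 + (S₁ - P₁) * (1 - p.1))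
        + (1 - p.2) * ((R₀ - T₀) * p.1 + (S₀ - P₀) * (1 - p.1)) from funext fun p => hg p.1 p.2]
    fun_prop
  have hF_eq : F = fun p => (p.1 * (1 - p.1) * g p, p.2 * (1 - p.2) * (-1 + (1 + θ) * p.1)) :=
    funext fun p => hF p.1 p.2
  have hF_diff : Differentiable ℝ F := by
    rw [hF_eq]
    fun_prop
  have hbracket_snd : ∀ x n : ℝ,
      (bracket (x, n)).2 = -(n * (1 - n) * (1 + θ)) * (x ^ 2 * (1 - x) * (1 - n)) := by
    intro x n
    have hG_snd : ∀ p, (G p).2 = 0 := fun p => congrArg Prod.snd (hG p.1 p.2)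
    rw [hbracket, snd_lieBracket_of_snd_eq_zero (hF_diff _) hG_snd, hG, hF_eq, (hasFDerivAt_environmentFeedback θ x n).fderiv]
    simp only [add_apply, smul_apply, coe_fst', coe_snd', smul_eq_mul]
    ring
  refine ⟨hbracket_snd, fun x n hx hn => ?_⟩
  rw [hbracket_snd]
  have hrate_pos : 0 < n * (1 - n) * (1 + θ) :=
    mul_pos (mul_pos hn.1 (sub_pos.2 hn.2)) (by linarith)
  have hG_pos : 0 < x ^ 2 * (1 - x) * (1 - n) :=
    mul_pos (mul_pos (pow_pos hx.1 2) (sub_pos.2 hx.2)) (sub_pos.2 hn.2)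
  exact mul_ne_zero (neg_ne_zero.2 hrate_pos.ne') hG_pos.ne'
end

section
/- Let θ > 0 and let g(x,n) = n·((R₁-T₁)x + (S₁-P₁)(1-x)) + (1-n)·((R₀-T₀)x + (S₀-P₀)(1-x)). Define F(x,n) = (x(1-x)·g(x,n), n(1-n)·(-1+(1+θ)x)) and G(x,n) = (x²(1-x)(1-n), 0). Then for every (x,n) ∈ (0,1)², the two vectors G(x,n) and [F,G](x,n) = (DG)F(x,n) − (DF)G(x,n) are linearly independent in ℝ². -/
/-!
Since `G` has vanishing second component, the second component of `[F, G]` is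
`-(∂F₂/∂x) · G₁ = -n(1-n)(1+θ) · x²(1-x)(1-n)`, which is nonzero in the open square, as is
`G₁`. The matrix with rows `G` and `[F, G]` is therefore triangular with nonzero diagonal.
-/

open VectorField

section LinearIndependence

variable {K M N : Type*} [Field K] [AddCommGroup M] [Module K M] [AddCommGroup N] [Module K N]

theorem linearIndependent_pair_of_triangular {u v : M × N}
    (hu₁ : u.1 ≠ 0) (hu₂ : u.2 = 0) (hv₂ : v.2 ≠ 0) : LinearIndependent K ![u, v] := by
  rw [LinearIndependent.pair_iff]
  intro s t hst
  have ht : t = 0 := by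
    simpa [hu₂, hv₂] using congrArg Prod.snd hst
  subst ht
  have hs : s • u.1 = 0 := by simpa using congrArg Prod.fst hst
  exact ⟨(smul_eq_zero.mp hs).resolve_right hu₁, rfl⟩

end LinearIndependence

section Calculus

variable {𝕜 : Type*} [NontriviallyNormedField 𝕜]
  {E M N : Type*} [NormedAddCommGroup E] [NormedSpace 𝕜 E]
  [NormedAddCommGroup M] [NormedSpace 𝕜 M] [NormedAddCommGroup N] [NormedSpace 𝕜 N]

theorem snd_fderiv_apply_of_snd_eq_zero {f : E → M × N} (hf : ∀ q, (f q).2 = 0) (p v : E) :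
    (fderiv 𝕜 f p v).2 = 0 := by
  by_cases hdiff : DifferentiableAt 𝕜 f p
  · have hsnd : (fun q => (f q).2) = fun _ => (0 : N) := funext hf
    have := congrArg (fun L : E →L[𝕜] N => L v) (fderiv.snd hdiff)
    simpa [hsnd] using this.symm
  · simp [fderiv_zero_of_not_differentiableAt hdiff]

theorem snd_lieBracket_of_snd_eq_zero_s1 {V W : M × N → M × N} {p : M × N}
    (hV : DifferentiableAt 𝕜 V p) (hW : ∀ q, (W q).2 = 0) :
    (lieBracket 𝕜 V W p).2 = -fderiv 𝕜 (fun q => (V q).2) p (W p) := by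
  rw [lieBracket, Prod.snd_sub, snd_fderiv_apply_of_snd_eq_zero hW, fderiv.snd hV]
  exact zero_sub _

theorem fderiv_apply_inl_eq_smul_deriv {f : 𝕜 × 𝕜 → E} {x y : 𝕜}
    (hf : DifferentiableAt 𝕜 f (x, y)) (a : 𝕜) :
    fderiv 𝕜 f (x, y) (a, 0) = a • deriv (fun t => f (t, y)) x := by
  have hline : HasDerivAt (fun t : 𝕜 => (t, y)) (1, 0) x :=
    (hasDerivAt_id x).prodMk (hasDerivAt_const x y)
  rw [show (fun t => f (t, y)) = f ∘ fun t => (t, y) from rfl,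
    fderiv_comp_deriv x hf hline.differentiableAt, hline.deriv, ← map_smul, Prod.smul_mk,
    smul_eq_mul, mul_one, smul_zero]

end Calculus

/-- At every interior point (x,n) ∈ (0,1)², the control vector field G(x,n)
and the Lie bracket [F,G](x,n) = (DG)F − (DF)G are linearly independent in ℝ². -/
theorem G_and_lie_bracket_linearly_independent
    (θ R₀ S₀ T₀ P₀ R₁ S₁ T₁ P₁ : ℝ) (hθ : 0 < θ)
    (g : ℝ × ℝ → ℝ)
    (hg : ∀ x n : ℝ, g (x, n)
      = n * ((R₁ - T₁) * x + (S₁ - P₁) * (1 - x))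
        + (1 - n) * ((R₀ - T₀) * x + (S₀ - P₀) * (1 - x)))
    (F G : ℝ × ℝ → ℝ × ℝ)
    (hF : ∀ x n : ℝ, F (x, n)
      = (x * (1 - x) * g (x, n), n * (1 - n) * (-1 + (1 + θ) * x)))
    (hG : ∀ x n : ℝ, G (x, n) = (x ^ 2 * (1 - x) * (1 - n), 0))
    (bracket : ℝ × ℝ → ℝ × ℝ)
    (hbracket : ∀ p : ℝ × ℝ, bracket p = fderiv ℝ G p (F p) - fderiv ℝ F p (G p)) :
    ∀ x n : ℝ, x ∈ Set.Ioo (0 : ℝ) 1 → n ∈ Set.Ioo (0 : ℝ) 1 →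
      LinearIndependent ℝ ![G (x, n), bracket (x, n)] := by
  rintro x n ⟨hx₀, hx₁⟩ ⟨hn₀, hn₁⟩
  have hF_diff : DifferentiableAt ℝ F (x, n) := by
    have hF_eq : F = fun q => (q.1 * (1 - q.1) *
        (q.2 * ((R₁ - T₁) * q.1 + (S₁ - P₁) * (1 - q.1))
          + (1 - q.2) * ((R₀ - T₀) * q.1 + (S₀ - P₀) * (1 - q.1))),
        q.2 * (1 - q.2) * (-1 + (1 + θ) * q.1)) := by
      funext ⟨a, b⟩; rw [hF, hg]
    rw [hF_eq]; fun_prop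
  have hG_snd : ∀ q, (G q).2 = 0 := fun ⟨a, b⟩ => by rw [hG]
  have hF_snd_partial : deriv (fun t => (F (t, n)).2) x = n * (1 - n) * (1 + θ) := by
    simp [hF]
  have hbracket_snd :
      (bracket (x, n)).2 = -(x ^ 2 * (1 - x) * (1 - n) * (n * (1 - n) * (1 + θ))) := by
    rw [show bracket (x, n) = lieBracket ℝ F G (x, n) from hbracket _,
      snd_lieBracket_of_snd_eq_zero_s1 hF_diff hG_snd, hG,
      fderiv_apply_inl_eq_smul_deriv hF_diff.snd, hF_snd_partial, smul_eq_mul]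
  have hx' := sub_pos.2 hx₁
  have hn' := sub_pos.2 hn₁
  have hG_fst : 0 < x ^ 2 * (1 - x) * (1 - n) := by positivity
  have hbracket_snd_ne : (bracket (x, n)).2 ≠ 0 := by
    rw [hbracket_snd, neg_ne_zero]; positivity
  rw [hG]
  exact linearIndependent_pair_of_triangular hG_fst.ne' rfl hbracket_snd_ne
end

section
/- (Non-singularity of the optimal incentive controller.) Under the setup of the incentive control problem, let θ > 0, let u : [0,T] → ℝ be continuous, let y = (x,n) : [0,T] → (0,1)² solve the controlled state equation ẋ = x(1-x)g(x,n) + x²(1-x)(1-n)u, ṅ = n(1-n)(-1+(1+θ)x), and let λ = (λ_x,λ_n) : [0,T] → ℝ² solve the costate equation λ̇ = −∂H/∂y along (y,λ,u). Define the switching function φ(t) = λ_x(t)·x(t)²(1-x(t))(1-n(t)). If t₀ ∈ (0,T) satisfies φ(t₀) = 0 and λ(t₀) ≠ (0,0), then φ'(t₀) ≠ 0; consequently t₀ is an isolated zero of φ, so the bang-bang control u*(t) = u_m·sign(φ(t)) switches between the values −u_m and u_m at isolated points of any interval on which λ does not vanish. -/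
/-!
At a zero `t₀` of the switching function `φ = λ_x · x²(1-x)(1-n)` the weight
`w = x²(1-x)(1-n)` is positive, so `λ_x(t₀) = 0` and hence `λ_n(t₀) ≠ 0`. Since `λ_x`
multiplies every term of the Hamiltonian that involves `g` or the control, the costate
equation then reads `λ̇_x(t₀) = -λ_n(t₀) n(1-n)(1+θ) ≠ 0`, and `φ'(t₀) = λ̇_x(t₀) w(t₀) ≠ 0`.
A zero with nonzero derivative is isolated, so `sign φ = ±1` near `t₀`.
-/

open Filter Topology

theorem HasDerivAt.mul_continuousAt_of_eq_zero {f g : ℝ → ℝ} {f' a : ℝ}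
    (hf : HasDerivAt f f' a) (hfa : f a = 0) (hg : ContinuousAt g a) :
    HasDerivAt (fun t => f t * g t) (f' * g a) a := by
  rw [hasDerivAt_iff_tendsto_slope] at hf ⊢
  have hslope : slope (fun t => f t * g t) a = fun t => slope f a t * g t := by
    funext t
    simp only [slope_def_field, hfa, zero_mul, sub_zero]
    ring
  rw [hslope]
  exact hf.mul (hg.tendsto.mono_left nhdsWithin_le_nhds)

theorem Real.mul_sign_eq_or_eq_neg (c : ℝ) {r : ℝ} (hr : r ≠ 0) :
    c * Real.sign r = c ∨ c * Real.sign r = -c := by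
  rcases Real.sign_apply_eq_of_ne_zero r hr with h | h <;> simp [h]

def incentiveHamiltonian (θ : ℝ) (g : ℝ × ℝ → ℝ) (y l : ℝ × ℝ) (v : ℝ) : ℝ :=
  l.1 * (y.1 * (1 - y.1) * (g y + y.1 * (1 - y.2) * v))
    + l.2 * (y.2 * (1 - y.2) * (-1 + (1 + θ) * y.1)) + y.2 ^ 2

theorem hasDerivAt_incentiveHamiltonian_fst_of_costate_fst_eq_zero
    (θ : ℝ) (g : ℝ × ℝ → ℝ) (a b lb v : ℝ) :
    HasDerivAt (fun z => incentiveHamiltonian θ g (z, b) (0, lb) v)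
      (lb * (b * (1 - b) * (1 + θ))) a := by
  have hlin : HasDerivAt (fun z : ℝ => lb * (b * (1 - b) * (-1 + (1 + θ) * z)) + b ^ 2)
      (lb * (b * (1 - b) * (1 + θ))) a := by
    simpa using ((((hasDerivAt_id a).const_mul (1 + θ)).const_add (-1)).const_mul
      (b * (1 - b))).const_mul lb |>.add_const (b ^ 2)
  simpa [incentiveHamiltonian] using hlin

theorem switching_weight_pos {a b : ℝ} (ha : a ∈ Set.Ioo (0 : ℝ) 1) (hb : b < 1) :
    0 < a ^ 2 * (1 - a) * (1 - b) :=
  mul_pos (mul_pos (pow_pos ha.1 2) (sub_pos.mpr ha.2)) (sub_pos.mpr hb)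

theorem optimal_incentive_controller_nonsingular_general
    (θ T um : ℝ) (hθ : 0 < θ)
    (g : ℝ × ℝ → ℝ)
    (u : ℝ → ℝ)
    (H : ℝ × ℝ → ℝ × ℝ → ℝ → ℝ)
    (hH : ∀ a b la lb v : ℝ, H (a, b) (la, lb) v
      = la * (a * (1 - a) * (g (a, b) + a * (1 - b) * v))
        + lb * (b * (1 - b) * (-1 + (1 + θ) * a)) + b ^ 2)
    (x n lx ln : ℝ → ℝ)
    (hmem : ∀ t ∈ Set.Icc (0 : ℝ) T,
      x t ∈ Set.Ioo (0 : ℝ) 1 ∧ n t ∈ Set.Ioo (0 : ℝ) 1)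
    (hx : ∀ t ∈ Set.Icc (0 : ℝ) T,
      HasDerivAt x (x t * (1 - x t) * g (x t, n t)
        + (x t) ^ 2 * (1 - x t) * (1 - n t) * u t) t)
    (hn : ∀ t ∈ Set.Icc (0 : ℝ) T,
      HasDerivAt n (n t * (1 - n t) * (-1 + (1 + θ) * x t)) t)
    (hlx : ∀ t ∈ Set.Icc (0 : ℝ) T,
      HasDerivAt lx (-(deriv (fun a => H (a, n t) (lx t, ln t) (u t)) (x t))) t)
    (φ : ℝ → ℝ)
    (hφ : ∀ t : ℝ, φ t = lx t * ((x t) ^ 2 * (1 - x t) * (1 - n t)))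
    (t₀ : ℝ) (ht₀ : t₀ ∈ Set.Ioo (0 : ℝ) T)
    (hzero : φ t₀ = 0) (hlam : (lx t₀, ln t₀) ≠ (0, 0)) :
    deriv φ t₀ ≠ 0 ∧
    (∀ᶠ s in nhdsWithin t₀ {t₀}ᶜ, φ s ≠ 0) ∧
    (∀ᶠ s in nhdsWithin t₀ {t₀}ᶜ,
      um * Real.sign (φ s) = um ∨ um * Real.sign (φ s) = -um) := by
  have ht₀' : t₀ ∈ Set.Icc (0 : ℝ) T := Set.Ioo_subset_Icc_self ht₀
  obtain ⟨hx₀, hn₀⟩ := hmem t₀ ht₀'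
  have hweight := switching_weight_pos hx₀ hn₀.2
  have hlx₀ : lx t₀ = 0 := by
    rw [hφ] at hzero
    exact (mul_eq_zero.mp hzero).resolve_right hweight.ne'
  have hln₀ : ln t₀ ≠ 0 := fun h => hlam (by rw [hlx₀, h])
  have hH' : H = incentiveHamiltonian θ g := by
    funext ⟨a, b⟩ ⟨la, lb⟩ v
    exact hH a b la lb v
  set dlx := -(ln t₀ * (n t₀ * (1 - n t₀) * (1 + θ)))
  have hlx' : HasDerivAt lx dlx t₀ := by
    simpa only [hH', hlx₀, (hasDerivAt_incentiveHamiltonian_fst_of_costate_fst_eq_zero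
      θ g (x t₀) (n t₀) (ln t₀) (u t₀)).deriv] using hlx t₀ ht₀'
  have hxc := (hx t₀ ht₀').continuousAt
  have hnc := (hn t₀ ht₀').continuousAt
  have hφ' : HasDerivAt φ (dlx * (x t₀ ^ 2 * (1 - x t₀) * (1 - n t₀))) t₀ := by
    rw [funext hφ]
    exact hlx'.mul_continuousAt_of_eq_zero hlx₀
      (((hxc.pow 2).mul (continuousAt_const.sub hxc)).mul (continuousAt_const.sub hnc))
  have hd : dlx * (x t₀ ^ 2 * (1 - x t₀) * (1 - n t₀)) ≠ 0 := by
    have : 0 < n t₀ * (1 - n t₀) * (1 + θ) :=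
      mul_pos (mul_pos hn₀.1 (sub_pos.mpr hn₀.2)) (by linarith)
    exact mul_ne_zero (neg_ne_zero.mpr (mul_ne_zero hln₀ this.ne')) hweight.ne'
  have hisolated : ∀ᶠ s in 𝓝[≠] t₀, φ s ≠ 0 := by
    simpa [hzero] using hφ'.eventually_ne hd
  refine ⟨hφ'.deriv ▸ hd, hisolated, ?_⟩
  filter_upwards [hisolated] with s hs
  exact Real.mul_sign_eq_or_eq_neg um hs

/-- Non-singularity of the optimal incentive controller.  Along any solution
of the controlled state equation and the costate equation with state in (0,1)², if the
switching function φ(t) = λ_x(t)·x(t)²(1−x(t))(1−n(t)) vanishes at t₀ ∈ (0,T) while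
λ(t₀) ≠ (0,0), then φ'(t₀) ≠ 0; consequently t₀ is an isolated zero of φ, so the
bang-bang control u*(t) = u_m·sign(φ(t)) takes only the values ±u_m near t₀
(switching at isolated points). -/
theorem optimal_incentive_controller_nonsingular
    (θ R₀ S₀ T₀ P₀ R₁ S₁ T₁ P₁ T um : ℝ) (hθ : 0 < θ) (hum : 0 < um)
    (g : ℝ × ℝ → ℝ)
    (hg : ∀ a b : ℝ, g (a, b)
      = b * ((R₁ - T₁) * a + (S₁ - P₁) * (1 - a))
        + (1 - b) * ((R₀ - T₀) * a + (S₀ - P₀) * (1 - a)))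
    (u : ℝ → ℝ) (hu : ContinuousOn u (Set.Icc 0 T))
    (H : ℝ × ℝ → ℝ × ℝ → ℝ → ℝ)
    (hH : ∀ a b la lb v : ℝ, H (a, b) (la, lb) v
      = la * (a * (1 - a) * (g (a, b) + a * (1 - b) * v))
        + lb * (b * (1 - b) * (-1 + (1 + θ) * a)) + b ^ 2)
    (x n lx ln : ℝ → ℝ)
    (hmem : ∀ t ∈ Set.Icc (0 : ℝ) T,
      x t ∈ Set.Ioo (0 : ℝ) 1 ∧ n t ∈ Set.Ioo (0 : ℝ) 1)
    (hx : ∀ t ∈ Set.Icc (0 : ℝ) T,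
      HasDerivAt x (x t * (1 - x t) * g (x t, n t)
        + (x t) ^ 2 * (1 - x t) * (1 - n t) * u t) t)
    (hn : ∀ t ∈ Set.Icc (0 : ℝ) T,
      HasDerivAt n (n t * (1 - n t) * (-1 + (1 + θ) * x t)) t)
    (hlx : ∀ t ∈ Set.Icc (0 : ℝ) T,
      HasDerivAt lx (-(deriv (fun a => H (a, n t) (lx t, ln t) (u t)) (x t))) t)
    (hln : ∀ t ∈ Set.Icc (0 : ℝ) T,
      HasDerivAt ln (-(deriv (fun b => H (x t, b) (lx t, ln t) (u t)) (n t))) t)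
    (φ : ℝ → ℝ)
    (hφ : ∀ t : ℝ, φ t = lx t * ((x t) ^ 2 * (1 - x t) * (1 - n t)))
    (t₀ : ℝ) (ht₀ : t₀ ∈ Set.Ioo (0 : ℝ) T)
    (hzero : φ t₀ = 0) (hlam : (lx t₀, ln t₀) ≠ (0, 0)) :
    deriv φ t₀ ≠ 0 ∧
    (∀ᶠ s in nhdsWithin t₀ {t₀}ᶜ, φ s ≠ 0) ∧
    (∀ᶠ s in nhdsWithin t₀ {t₀}ᶜ,
      um * Real.sign (φ s) = um ∨ um * Real.sign (φ s) = -um) :=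
  optimal_incentive_controller_nonsingular_general θ T um hθ g u H hH x n lx ln hmem hx hn hlx φ hφ
    t₀ ht₀ hzero hlam
end

section
/- Let θ > 0, define x_c = 1/(1+θ), and let g₀(x) = (R₀−T₀)x + (S₀−P₀)(1−x) and g₁(x) = (R₁−T₁)x + (S₁−P₁)(1−x), with g(x,n) = n·g₁(x) + (1−n)·g₀(x). Assume R₁ < T₁, S₁ < P₁, and g₀(x_c) > 0. Then there exists a unique n* ∈ (0,1) with g(x_c, n*) = 0, given explicitly by n* = g₀(x_c)/(g₀(x_c) − g₁(x_c)), and the point (x_c, n*) ∈ (0,1)² is an equilibrium of the feedback-evolving game dynamics, i.e. x_c(1−x_c)g(x_c,n*) = 0 and n*(1−n*)(−1+(1+θ)x_c) = 0. -/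
/-- Under R₁ < T₁, S₁ < P₁ and g₀(x_c) > 0 with x_c = 1/(1+θ), there is a
unique n* ∈ (0,1) with g(x_c, n*) = 0, given by n* = g₀(x_c)/(g₀(x_c) − g₁(x_c)), and
(x_c, n*) is an interior equilibrium of the feedback-evolving game dynamics. -/
theorem interior_equilibrium_V2
    (θ R₀ S₀ T₀ P₀ R₁ S₁ T₁ P₁ : ℝ) (hθ : 0 < θ)
    (hR : R₁ < T₁) (hS : S₁ < P₁)
    (g₀ g₁ : ℝ → ℝ) (g : ℝ → ℝ → ℝ)
    (hg₀ : ∀ a : ℝ, g₀ a = (R₀ - T₀) * a + (S₀ - P₀) * (1 - a))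
    (hg₁ : ∀ a : ℝ, g₁ a = (R₁ - T₁) * a + (S₁ - P₁) * (1 - a))
    (hg : ∀ a b : ℝ, g a b = b * g₁ a + (1 - b) * g₀ a)
    (xc : ℝ) (hxc : xc = 1 / (1 + θ))
    (hg0pos : 0 < g₀ xc)
    (nstar : ℝ) (hnstar : nstar = g₀ xc / (g₀ xc - g₁ xc)) :
    xc ∈ Set.Ioo (0 : ℝ) 1 ∧
    nstar ∈ Set.Ioo (0 : ℝ) 1 ∧
    g xc nstar = 0 ∧
    (∀ m ∈ Set.Ioo (0 : ℝ) 1, g xc m = 0 → m = nstar) ∧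
    xc * (1 - xc) * g xc nstar = 0 ∧
    nstar * (1 - nstar) * (-1 + (1 + θ) * xc) = 0 := by
  have h1θ : (0:ℝ) < 1 + θ := by linarith
  have hxc0 : 0 < xc := by rw [hxc]; positivity
  have hxc1 : xc < 1 := by
    rw [hxc]
    rw [div_lt_one h1θ]; linarith
  have hg1neg : g₁ xc < 0 := by
    rw [hg₁]
    have : (R₁ - T₁) * xc < 0 := mul_neg_of_neg_of_pos (by linarith) hxc0
    have : (S₁ - P₁) * (1 - xc) < 0 := mul_neg_of_neg_of_pos (by linarith) (by linarith)
    linarith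
  have hden : 0 < g₀ xc - g₁ xc := by linarith
  have hn0 : 0 < nstar := by rw [hnstar]; positivity
  have hn1 : nstar < 1 := by
    rw [hnstar, div_lt_one hden]; linarith
  have hgz : g xc nstar = 0 := by
    rw [hg, hnstar]
    field_simp
    ring
  have hxeq : (1 + θ) * xc = 1 := by
    rw [hxc]; field_simp
  refine ⟨⟨hxc0, hxc1⟩, ⟨hn0, hn1⟩, hgz, ?_, by rw [hgz]; ring, by rw [hxeq]; ring⟩
  intro m _ hm
  rw [hg] at hm
  rw [hnstar]
  have : m * (g₀ xc - g₁ xc) = g₀ xc := by linarith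
  field_simp
  linarith
end

section
/- Let θ > 0, γ > 0, and g(x,o) = o·((R₁-T₁)x + (S₁-P₁)(1-x)) + (1-o)·((R₀-T₀)x + (S₀-P₀)(1-x)). If (x,n,o) : [0,∞) → ℝ³ is differentiable and solves the opinion-coupled system ẋ = x(1-x)g(x,o), ṅ = n(1-n)(θx − (1−x)), ȯ = −γ(o−n), with (x(0), n(0), o(0)) ∈ [0,1]³, then (x(t), n(t), o(t)) ∈ [0,1]³ for all t ≥ 0; that is, the unit cube [0,1]³ is forward invariant. -/
/-!
Each of `x` and `n` solves a logistic-type equation `y' = y (1 - y) k(t)` with continuous `k`, so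
`y` and `1 - y` both solve linear equations `z' = z h(t)`. A solution of such an equation that
vanishes once vanishes from then on (Grönwall), so by the intermediate value theorem it cannot
change sign. Once `n` is known to stay in `[0, 1]`, the opinion `o` is a relaxation towards `n`:
`(o - c) e^{γ t}` has derivative `γ (n - c) e^{γ t}`, which gives the bounds for `c = 0` and `c = 1`.
-/

open Set

theorem nonneg_of_hasDerivAt_mul_self {y h : ℝ → ℝ} {a : ℝ} (hh : ContinuousOn h (Ici a))
    (hy : ∀ t ≥ a, HasDerivAt y (y t * h t) t) (ha : 0 ≤ y a) : ∀ t ≥ a, 0 ≤ y t := by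
  intro T hT
  by_contra! hneg
  have hyc : ContinuousOn y (Icc a T) := fun t ht ↦ (hy t ht.1).continuousAt.continuousWithinAt
  obtain ⟨t₀, ht₀, hzero⟩ := intermediate_value_Icc' hT hyc ⟨hneg.le, ha⟩
  obtain ⟨C, hC⟩ := isCompact_Icc.exists_bound_of_continuousOn
    (hh.mono (Icc_subset_Ici_self.trans (Ici_subset_Ici.2 ht₀.1)))
  have hvanish : ∀ t ∈ Icc t₀ T, y t = 0 :=
    eq_zero_of_abs_deriv_le_mul_abs_self_of_eq_zero_right (K := C)
      (hyc.mono (Icc_subset_Icc_left ht₀.1))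
      (fun t ht ↦ (hy t (ht₀.1.trans ht.1)).hasDerivWithinAt) hzero
      (fun t ht ↦ by
        rw [norm_mul, mul_comm]
        exact mul_le_mul_of_nonneg_right (hC t (Ico_subset_Icc_self ht)) (norm_nonneg _))
  exact hneg.ne (hvanish T ⟨ht₀.2, le_rfl⟩)

theorem mem_Icc_of_hasDerivAt_logistic {y k : ℝ → ℝ} {a : ℝ} (hk : ContinuousOn k (Ici a))
    (hy : ∀ t ≥ a, HasDerivAt y (y t * (1 - y t) * k t) t) (ha : y a ∈ Icc 0 1) :
    ∀ t ≥ a, y t ∈ Icc 0 1 := by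
  have hyc : ContinuousOn y (Ici a) := fun t ht ↦ (hy t ht).continuousAt.continuousWithinAt
  have hlower : ∀ t ≥ a, 0 ≤ y t :=
    nonneg_of_hasDerivAt_mul_self (h := fun t ↦ (1 - y t) * k t) (by fun_prop)
      (fun t ht ↦ (hy t ht).congr_deriv (by ring)) ha.1
  have hupper : ∀ t ≥ a, 0 ≤ 1 - y t :=
    nonneg_of_hasDerivAt_mul_self (h := fun t ↦ -(y t * k t)) (by fun_prop)
      (fun t ht ↦ ((hy t ht).const_sub 1).congr_deriv (by ring)) (sub_nonneg.2 ha.2)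
  exact fun t ht ↦ ⟨hlower t ht, sub_nonneg.1 (hupper t ht)⟩

theorem nonneg_of_hasDerivAt_relaxation {o n : ℝ → ℝ} {γ a : ℝ} (hγ : 0 ≤ γ)
    (ho : ∀ t ≥ a, HasDerivAt o (-(γ * (o t - n t))) t) (hn : ∀ t ≥ a, 0 ≤ n t)
    (ha : 0 ≤ o a) : ∀ t ≥ a, 0 ≤ o t := by
  set w : ℝ → ℝ := fun t ↦ o t * Real.exp (γ * t)
  have hw : ∀ t ≥ a, HasDerivAt w (γ * n t * Real.exp (γ * t)) t := fun t ht ↦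
    ((ho t ht).mul (((hasDerivAt_id' t).const_mul γ).exp)).congr_deriv (by ring)
  have hmono : MonotoneOn w (Ici a) := by
    refine monotoneOn_of_hasDerivWithinAt_nonneg (convex_Ici a)
      (fun t ht ↦ (hw t ht).continuousAt.continuousWithinAt)
      (fun t ht ↦ (hw t (interior_subset ht)).hasDerivWithinAt) (fun t ht ↦ ?_)
    have := hn t (interior_subset ht)
    positivity
  intro t ht
  have hwt : 0 ≤ o t * Real.exp (γ * t) :=
    (mul_nonneg ha (Real.exp_pos _).le).trans (hmono self_mem_Ici ht ht)
  exact nonneg_of_mul_nonneg_left hwt (Real.exp_pos _)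

theorem mem_Icc_of_hasDerivAt_relaxation {o n : ℝ → ℝ} {γ a : ℝ} (hγ : 0 ≤ γ)
    (ho : ∀ t ≥ a, HasDerivAt o (-(γ * (o t - n t))) t) (hn : ∀ t ≥ a, n t ∈ Icc 0 1)
    (ha : o a ∈ Icc 0 1) : ∀ t ≥ a, o t ∈ Icc 0 1 := by
  have hlower := nonneg_of_hasDerivAt_relaxation hγ ho (fun t ht ↦ (hn t ht).1) ha.1
  have hupper := nonneg_of_hasDerivAt_relaxation (o := fun t ↦ 1 - o t) (n := fun t ↦ 1 - n t) hγ
    (fun t ht ↦ ((ho t ht).const_sub 1).congr_deriv (by ring))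
    (fun t ht ↦ sub_nonneg.2 (hn t ht).2) (sub_nonneg.2 ha.2)
  exact fun t ht ↦ ⟨hlower t ht, sub_nonneg.1 (hupper t ht)⟩

theorem unit_cube_forward_invariant_opinion_general
    (θ γ R₀ S₀ T₀ P₀ R₁ S₁ T₁ P₁ : ℝ) (hγ : 0 < γ)
    (g : ℝ → ℝ → ℝ)
    (hg : ∀ a c : ℝ, g a c
      = c * ((R₁ - T₁) * a + (S₁ - P₁) * (1 - a))
        + (1 - c) * ((R₀ - T₀) * a + (S₀ - P₀) * (1 - a)))
    (x n o : ℝ → ℝ)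
    (hx : ∀ t ≥ (0 : ℝ), HasDerivAt x (x t * (1 - x t) * g (x t) (o t)) t)
    (hn : ∀ t ≥ (0 : ℝ),
      HasDerivAt n (n t * (1 - n t) * (θ * x t - (1 - x t))) t)
    (ho : ∀ t ≥ (0 : ℝ), HasDerivAt o (-(γ * (o t - n t))) t)
    (hx0 : x 0 ∈ Set.Icc (0 : ℝ) 1) (hn0 : n 0 ∈ Set.Icc (0 : ℝ) 1)
    (ho0 : o 0 ∈ Set.Icc (0 : ℝ) 1) :
    ∀ t ≥ (0 : ℝ),
      x t ∈ Set.Icc (0 : ℝ) 1 ∧ n t ∈ Set.Icc (0 : ℝ) 1 ∧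
      o t ∈ Set.Icc (0 : ℝ) 1 := by
  have hxc : ContinuousOn x (Ici 0) := fun t ht ↦ (hx t ht).continuousAt.continuousWithinAt
  have hoc : ContinuousOn o (Ici 0) := fun t ht ↦ (ho t ht).continuousAt.continuousWithinAt
  have hfitness : ContinuousOn (fun t ↦ g (x t) (o t)) (Ici 0) := by
    simp only [hg]
    fun_prop
  have hx_mem := mem_Icc_of_hasDerivAt_logistic hfitness hx hx0
  have hn_mem := mem_Icc_of_hasDerivAt_logistic (by fun_prop) hn hn0
  have ho_mem := mem_Icc_of_hasDerivAt_relaxation hγ.le ho hn_mem ho0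
  exact fun t ht ↦ ⟨hx_mem t ht, hn_mem t ht, ho_mem t ht⟩

/-- The unit cube [0,1]³ is forward invariant under the opinion-coupled
feedback-evolving game dynamics ẋ = x(1−x)g(x,o), ṅ = n(1−n)(θx − (1−x)),
ȯ = −γ(o−n). -/
theorem unit_cube_forward_invariant_opinion
    (θ γ R₀ S₀ T₀ P₀ R₁ S₁ T₁ P₁ : ℝ) (hθ : 0 < θ) (hγ : 0 < γ)
    (g : ℝ → ℝ → ℝ)
    (hg : ∀ a c : ℝ, g a c
      = c * ((R₁ - T₁) * a + (S₁ - P₁) * (1 - a))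
        + (1 - c) * ((R₀ - T₀) * a + (S₀ - P₀) * (1 - a)))
    (x n o : ℝ → ℝ)
    (hx : ∀ t ≥ (0 : ℝ), HasDerivAt x (x t * (1 - x t) * g (x t) (o t)) t)
    (hn : ∀ t ≥ (0 : ℝ),
      HasDerivAt n (n t * (1 - n t) * (θ * x t - (1 - x t))) t)
    (ho : ∀ t ≥ (0 : ℝ), HasDerivAt o (-(γ * (o t - n t))) t)
    (hx0 : x 0 ∈ Set.Icc (0 : ℝ) 1) (hn0 : n 0 ∈ Set.Icc (0 : ℝ) 1)
    (ho0 : o 0 ∈ Set.Icc (0 : ℝ) 1) :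
    ∀ t ≥ (0 : ℝ),
      x t ∈ Set.Icc (0 : ℝ) 1 ∧ n t ∈ Set.Icc (0 : ℝ) 1 ∧
      o t ∈ Set.Icc (0 : ℝ) 1 :=
  unit_cube_forward_invariant_opinion_general θ γ R₀ S₀ T₀ P₀ R₁ S₁ T₁ P₁ hγ g hg x n o hx hn ho hx0
    hn0 ho0
end
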